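/- Assume d ≥ 3. For every d×d complex matrix ρ with Tr ρ = 1 and ρ J_z = J_z ρ, the probability of correctly identifying a known spin-1 state using the total-angular-momentum measurement satisfies (1/3) Σ_{μ∈{−1,0,1}} Tr[ Π_{j+μ} (ρ ⊗ f_{μ+1} f_{μ+1}†) ] = 1/6 + ((2j+1)² − 2)/(6 j (j+1) (2j+1)) · Tr[ρ J_z] + 1/(2 j (j+1)) · Tr[ρ J_z²], where f_0, f_1, f_2 ∈ ℂ³ are the K_z-eigenvectors with eigenvalues −1, 0, +1 respectively. -/

import Mathlib

open Matrix Complex Kronecker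
open scoped ComplexOrder

noncomputable section

/-- spin value j = (d-1)/2 -/
def jr (d : ℕ) : ℝ := ((d : ℝ) - 1) / 2

/-- λ = j(j+1) = (d²-1)/4 -/
def lam (d : ℕ) : ℝ := ((d : ℝ) ^ 2 - 1) / 4

/-- angular momentum operator J_z -/
def Jz (d : ℕ) : Matrix (Fin d) (Fin d) ℂ :=
  Matrix.diagonal (fun m => ((m : ℂ) - ((d : ℂ) - 1) / 2))

/-- raising operator J_+ -/
def Jp (d : ℕ) : Matrix (Fin d) (Fin d) ℂ :=
  Matrix.of (fun a b : Fin d =>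
    if (a : ℕ) = (b : ℕ) + 1 then
      (Real.sqrt (((b : ℕ) + 1) * ((d : ℝ) - 1 - (b : ℕ))) : ℂ)
    else 0)

/-- lowering operator J_- -/
def Jm (d : ℕ) : Matrix (Fin d) (Fin d) ℂ := (Jp d)ᴴ

/-- J_x -/
def Jx (d : ℕ) : Matrix (Fin d) (Fin d) ℂ := (2 : ℂ)⁻¹ • (Jp d + Jm d)

/-- J_y -/
def Jy (d : ℕ) : Matrix (Fin d) (Fin d) ℂ := (2 * Complex.I)⁻¹ • (Jp d - Jm d)

/-- the superoperator ζ -/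
def zeta (d : ℕ) (X : Matrix (Fin d) (Fin d) ℂ) : Matrix (Fin d) (Fin d) ℂ :=
  ((lam d : ℂ))⁻¹ • (Jx d * X * Jx d + Jy d * X * Jy d + Jz d * X * Jz d)

/-- n-fold composition ζ^∘n -/
def zetaIter (d : ℕ) (n : ℕ) (X : Matrix (Fin d) (Fin d) ℂ) : Matrix (Fin d) (Fin d) ℂ :=
  (zeta d)^[n] X

/-- rotation e^{-iθ J} -/
def rot (d : ℕ) (K : Matrix (Fin d) (Fin d) ℂ) (θ : ℝ) : Matrix (Fin d) (Fin d) ℂ :=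
  NormedSpace.exp ((-Complex.I * (θ : ℂ)) • K)

/-- rotation covariance of a linear map with respect to all three generators -/
def RotCovariant (d : ℕ)
    (ξ : Matrix (Fin d) (Fin d) ℂ →ₗ[ℂ] Matrix (Fin d) (Fin d) ℂ) : Prop :=
  ∀ K ∈ ({Jx d, Jy d, Jz d} : Set (Matrix (Fin d) (Fin d) ℂ)), ∀ (θ : ℝ),
    ∀ X : Matrix (Fin d) (Fin d) ℂ,
      ξ (rot d K θ * X * rot d K (-θ)) = rot d K θ * ξ X * rot d K (-θ)

/-- positivity of a map -/
def PosMap (d : ℕ)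
    (ξ : Matrix (Fin d) (Fin d) ℂ →ₗ[ℂ] Matrix (Fin d) (Fin d) ℂ) : Prop :=
  ∀ X : Matrix (Fin d) (Fin d) ℂ, X.PosSemidef → (ξ X).PosSemidef

end

/-- total angular momentum squared 𝒥² on ℂ^d ⊗ ℂ³ -/
noncomputable def J2one (d : ℕ) : Matrix (Fin d × Fin 3) (Fin d × Fin 3) ℂ :=
  (Jx d ⊗ₖ (1 : Matrix (Fin 3) (Fin 3) ℂ) + (1 : Matrix (Fin d) (Fin d) ℂ) ⊗ₖ Jx 3) ^ 2
  + (Jy d ⊗ₖ (1 : Matrix (Fin 3) (Fin 3) ℂ) + (1 : Matrix (Fin d) (Fin d) ℂ) ⊗ₖ Jy 3) ^ 2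
  + (Jz d ⊗ₖ (1 : Matrix (Fin 3) (Fin 3) ℂ) + (1 : Matrix (Fin d) (Fin d) ℂ) ⊗ₖ Jz 3) ^ 2

/-- λ_μ = (j+μ)(j+μ+1) -/
noncomputable def lamMu (d : ℕ) (μ : ℤ) : ℝ := (jr d + μ) * (jr d + μ + 1)

/-- Lagrange interpolation projector onto total angular momentum j+μ,
where ν₁, ν₂ are the two other values of μ in {-1,0,1}. -/
noncomputable def lagProj (d : ℕ) (μ ν₁ ν₂ : ℤ) :
    Matrix (Fin d × Fin 3) (Fin d × Fin 3) ℂ :=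
  (((lamMu d μ - lamMu d ν₁) * (lamMu d μ - lamMu d ν₂) : ℝ) : ℂ)⁻¹ •
    ((J2one d - ((lamMu d ν₁ : ℝ) : ℂ) • (1 : Matrix (Fin d × Fin 3) (Fin d × Fin 3) ℂ))
      * (J2one d - ((lamMu d ν₂ : ℝ) : ℂ) • (1 : Matrix (Fin d × Fin 3) (Fin d × Fin 3) ℂ)))

/-- projector onto total angular momentum j-1 -/
noncomputable def ProjM1 (d : ℕ) := lagProj d (-1) 0 1
/-- projector onto total angular momentum j -/
noncomputable def Proj0 (d : ℕ) := lagProj d 0 (-1) 1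
/-- projector onto total angular momentum j+1 -/
noncomputable def ProjP1 (d : ℕ) := lagProj d 1 (-1) 0


/-!
In the product basis `e_m ⊗ f_k`, `𝒥² = (λ + 2) + 2 J_z ⊗ K_z + (J₊ ⊗ K₋ + J₋ ⊗ K₊)`: a diagonal
part plus a spin-flip part with zero diagonal. Since `J_z` has simple spectrum, `ρ` is diagonal, so
only the diagonal entries of the Lagrange projectors matter, and in a product of two shifted copies
of `𝒥²` the spin flip reaches the diagonal only through its square, whose diagonal is
`(J₊J₋)_mm (K₋K₊)_kk + (J₋J₊)_mm (K₊K₋)_kk`. This yields the squared Clebsch–Gordan coefficients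
`⟨j m; 1 μ | j+μ, m+μ⟩²` as quadratics in the `J_z`-eigenvalue, and their average over `μ` is the
claimed quadratic in `J_z`.
-/

section MatrixLemmas

variable {n R : Type*} [Fintype n] [DecidableEq n]

lemma inv_two_mul_I_mul_self : (2 * Complex.I)⁻¹ * (2 * Complex.I)⁻¹ = -4⁻¹ := by
  rw [← mul_inv, mul_mul_mul_comm, Complex.I_mul_I]
  norm_num

lemma sq_add_sq_of_ladder (A B : Matrix n n ℂ) :
    ((2 : ℂ)⁻¹ • (A + B)) ^ 2 + ((2 * Complex.I)⁻¹ • (A - B)) ^ 2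
      = (2 : ℂ)⁻¹ • (A * B + B * A) := by
  rw [sq, sq, smul_mul_smul_comm, smul_mul_smul_comm, inv_two_mul_I_mul_self]
  simp only [add_mul, mul_add, sub_mul, mul_sub]
  module

omit [Fintype n] [DecidableEq n] in
lemma kronecker_add_kronecker_of_ladder {m : Type*} (A B : Matrix n n ℂ) (C D : Matrix m m ℂ) :
    ((2 : ℂ)⁻¹ • (A + B)) ⊗ₖ ((2 : ℂ)⁻¹ • (C + D))
      + ((2 * Complex.I)⁻¹ • (A - B)) ⊗ₖ ((2 * Complex.I)⁻¹ • (C - D))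
      = (2 : ℂ)⁻¹ • (A ⊗ₖ D + B ⊗ₖ C) := by
  ext ⟨a, c⟩ ⟨b, e⟩
  simp only [Matrix.add_apply, Matrix.smul_apply, kronecker_apply, Matrix.sub_apply, smul_eq_mul]
  linear_combination (A a b - B a b) * (C c e - D c e) * inv_two_mul_I_mul_self

lemma sq_kronecker_one_add_one_kronecker {m : Type*} [Fintype m] [DecidableEq m]
    (A : Matrix n n ℂ) (B : Matrix m m ℂ) :
    (A ⊗ₖ (1 : Matrix m m ℂ) + (1 : Matrix n n ℂ) ⊗ₖ B) ^ 2
      = (A ^ 2) ⊗ₖ (1 : Matrix m m ℂ) + (2 : ℂ) • (A ⊗ₖ B) + (1 : Matrix n n ℂ) ⊗ₖ (B ^ 2) := by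
  simp only [sq, add_mul, mul_add, ← mul_kronecker_mul, one_mul, mul_one]
  module

lemma mul_apply_self_of_diagonal_add [CommRing R] (D : n → R) {X : Matrix n n R}
    (hX : ∀ i, X i i = 0) (a b : R) (i : n) :
    ((diagonal D + X - a • 1) * (diagonal D + X - b • 1)) i i
      = (D i - a) * (D i - b) + (X * X) i i := by
  have hshift : ∀ c : R, diagonal D + X - c • 1 = diagonal (fun i => D i - c) + X := by
    intro c
    rw [add_sub_right_comm, smul_one_eq_diagonal, diagonal_sub]
  simp [hshift, add_mul, mul_add, diagonal_mul, mul_diagonal, hX]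

lemma eq_diagonal_of_commute_diagonal [CommRing R] [NoZeroDivisors R] {e : n → R}
    (he : Function.Injective e) {A : Matrix n n R} (h : A * diagonal e = diagonal e * A) :
    A = diagonal fun i => A i i := by
  ext a b
  rcases eq_or_ne a b with rfl | hab
  · simp
  · have hab' := congr_fun₂ h a b
    rw [mul_diagonal, diagonal_mul] at hab'
    have : (e b - e a) * A a b = 0 := by linear_combination hab'
    rw [diagonal_apply_ne _ hab]
    exact (mul_eq_zero.1 this).resolve_left (sub_ne_zero.2 (he.ne hab.symm))

lemma trace_diagonal_mul [Semiring R] (r : n → R) (A : Matrix n n R) :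
    trace (diagonal r * A) = ∑ i, r i * A i i := by
  simp [trace, diagonal_mul]

lemma trace_mul_diagonal_kronecker_single {κ : Type*} [Fintype κ] [DecidableEq κ]
    [CommSemiring R] (A : Matrix (n × κ) (n × κ) R) (r : n → R) (k : κ) :
    trace (A * (diagonal r ⊗ₖ single k k 1)) = ∑ i, r i * A (i, k) (i, k) := by
  rw [← diagonal_single, diagonal_kronecker_diagonal, trace, Fintype.sum_prod_type]
  simp [mul_diagonal, Pi.single_apply, mul_comm]

end MatrixLemmas

lemma sum_ite_eq_val_add_one {d : ℕ} {M : Type*} [AddCommMonoid M] {a : Fin d} {x : M}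
    (hx : (a : ℕ) = 0 → x = 0) : ∑ b : Fin d, (if (a : ℕ) = b + 1 then x else 0) = x := by
  by_cases ha : (a : ℕ) = 0
  · simp [ha, hx ha]
  · rw [Finset.sum_eq_single_of_mem ⟨a - 1, by omega⟩ (Finset.mem_univ _)]
    · simp only [if_pos (by omega : (a : ℕ) = a - 1 + 1)]
    · intro b _ hb
      rw [if_neg fun h => hb (Fin.ext (by simp only; omega))]

lemma sum_ite_val_eq_add_one {d : ℕ} {M : Type*} [AddCommMonoid M] {a : Fin d} {x : M}
    (hx : (a : ℕ) + 1 = d → x = 0) : ∑ b : Fin d, (if (b : ℕ) = a + 1 then x else 0) = x := by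
  by_cases ha : (a : ℕ) + 1 = d
  · simp [hx ha]
  · rw [Finset.sum_eq_single_of_mem ⟨a + 1, by omega⟩ (Finset.mem_univ _)]
    · simp
    · intro b _ hb
      rw [if_neg fun h => hb (Fin.ext h)]

lemma average_clebschGordan_sq {K : Type*} [Field K] [CharZero K] {j : K} (hj₀ : j ≠ 0)
    (hj₁ : 2 * j + 1 ≠ 0) (hj₂ : j + 1 ≠ 0) (z : K) :
    3⁻¹ * ((j + z) * (j + z - 1) / (2 * j * (2 * j + 1)) + z ^ 2 / (j * (j + 1))
        + (j + z + 1) * (j + z + 2) / ((2 * j + 1) * (2 * j + 2)))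
      = 1 / 6 + ((2 * j + 1) ^ 2 - 2) / (6 * j * (j + 1) * (2 * j + 1)) * z
        + 1 / (2 * j * (j + 1)) * z ^ 2 := by
  rw [show 2 * j + 2 = 2 * (j + 1) by ring]
  -- `field_simp` normalises `2 * j + 1` to `j * 2 + 1` before looking for this hypothesis
  have hj₁' : j * 2 + 1 ≠ 0 := by rwa [mul_comm]
  field_simp
  ring

section Ladder

variable (d : ℕ)

lemma Jp_apply (a b : Fin d) :
    Jp d a b = if (a : ℕ) = b + 1 then
      (Real.sqrt (((b : ℕ) + 1) * ((d : ℝ) - 1 - (b : ℕ))) : ℂ) else 0 := rfl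

lemma Jp_apply_self (m : Fin d) : Jp d m m = 0 := by simp [Jp_apply]

lemma Jm_apply_self (m : Fin d) : Jm d m m = 0 := by
  rw [Jm, conjTranspose_apply, Jp_apply_self, star_zero]

lemma Jp_apply_mul_star_Jp_apply {a b : Fin d} (hab : (a : ℕ) = b + 1) :
    Jp d a b * star (Jp d a b) = ((b : ℂ) + 1) * ((d : ℂ) - 1 - b) := by
  have hb : (b : ℝ) + 1 ≤ d := by exact_mod_cast (by omega : (b : ℕ) + 1 ≤ d)
  rw [Jp_apply, if_pos hab, Complex.star_def, Complex.conj_ofReal, ← Complex.ofReal_mul,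
    Real.mul_self_sqrt (by nlinarith)]
  push_cast
  ring

lemma Jp_mul_Jm : Jp d * Jm d = diagonal fun m : Fin d => (m : ℂ) * ((d : ℂ) - m) := by
  ext a b
  simp only [mul_apply, Jm, conjTranspose_apply, diagonal_apply]
  rcases eq_or_ne a b with rfl | hab
  · rw [if_pos rfl, ← sum_ite_eq_val_add_one (a := a) (x := (a : ℂ) * ((d : ℂ) - a))
      (by simp +contextual)]
    refine Finset.sum_congr rfl fun c _ => ?_
    split_ifs with h
    · rw [Jp_apply_mul_star_Jp_apply d h, h]
      push_cast
      ring
    · simp [Jp_apply, h]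
  · rw [if_neg hab]
    refine Finset.sum_eq_zero fun c _ => ?_
    simp only [Jp_apply]
    split_ifs <;> first | exact absurd (Fin.ext (by omega)) hab | simp

lemma Jm_mul_Jp :
    Jm d * Jp d = diagonal fun m : Fin d => ((m : ℂ) + 1) * ((d : ℂ) - 1 - m) := by
  ext a b
  simp only [mul_apply, Jm, conjTranspose_apply, diagonal_apply]
  rcases eq_or_ne a b with rfl | hab
  · rw [if_pos rfl, ← sum_ite_val_eq_add_one (a := a) (x := ((a : ℂ) + 1) * ((d : ℂ) - 1 - a))
      fun h => by rw [show (d : ℂ) = a + 1 by exact_mod_cast h.symm]; ring]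
    refine Finset.sum_congr rfl fun c _ => ?_
    split_ifs with h
    · rw [mul_comm, Jp_apply_mul_star_Jp_apply d h]
    · simp [Jp_apply, h]
  · rw [if_neg hab]
    refine Finset.sum_eq_zero fun c _ => ?_
    simp only [Jp_apply]
    split_ifs <;> first | exact absurd (Fin.ext (by omega)) hab | simp

lemma Jp_mul_Jp_apply_self (m : Fin d) : (Jp d * Jp d) m m = 0 := by
  rw [mul_apply]
  refine Finset.sum_eq_zero fun c _ => ?_
  simp only [Jp_apply]
  split_ifs <;> first | omega | simp

lemma Jm_mul_Jm_apply_self (m : Fin d) : (Jm d * Jm d) m m = 0 := by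
  rw [Jm, ← conjTranspose_mul, conjTranspose_apply, Jp_mul_Jp_apply_self, star_zero]

end Ladder

section Coupling

variable (d : ℕ)

lemma lam_eq : lam d = jr d * (jr d + 1) := by
  unfold lam jr
  ring

lemma natCast_eq_two_mul_jr_add_one : (d : ℂ) = 2 * (jr d : ℂ) + 1 := by
  simp only [jr]
  push_cast
  ring

lemma lamMu_eq (μ : ℤ) : (lamMu d μ : ℂ) = ((jr d : ℂ) + μ) * ((jr d : ℂ) + μ + 1) := by
  simp only [lamMu]
  push_cast
  ring

lemma lamMu_sub_lamMu (μ ν : ℤ) :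
    lamMu d μ - lamMu d ν = (μ - ν) * (2 * jr d + μ + ν + 1) := by
  simp only [lamMu]
  ring

lemma Jz_apply_self (m : Fin d) : Jz d m m = (m : ℂ) - jr d := by
  rw [Jz, diagonal_apply_eq, jr]
  push_cast
  ring

lemma Jz_sq_apply_self (m : Fin d) : (Jz d ^ 2) m m = Jz d m m ^ 2 := by
  rw [Jz, diagonal_pow, diagonal_apply_eq, diagonal_apply_eq, Pi.pow_apply]

lemma Jx_sq_add_Jy_sq_add_Jz_sq : Jx d ^ 2 + Jy d ^ 2 + Jz d ^ 2 = (lam d : ℂ) • 1 := by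
  rw [Jx, Jy, sq_add_sq_of_ladder, Jp_mul_Jm, Jm_mul_Jp, Jz, sq, diagonal_mul_diagonal]
  ext a b
  rcases eq_or_ne a b with rfl | hab
  · simp only [Matrix.add_apply, Matrix.smul_apply, diagonal_apply_eq, one_apply_eq, lam,
      smul_eq_mul]
    push_cast
    ring
  · simp [hab]

noncomputable def spinFlip : Matrix (Fin d × Fin 3) (Fin d × Fin 3) ℂ := Jp d ⊗ₖ Jm 3 + Jm d ⊗ₖ Jp 3

lemma spinFlip_apply_self (p : Fin d × Fin 3) : spinFlip d p p = 0 := by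
  simp [spinFlip, Jp_apply_self, Jm_apply_self]

lemma spinFlip_mul_self_apply_self (m : Fin d) (k : Fin 3) :
    (spinFlip d * spinFlip d) (m, k) (m, k)
      = (Jp d * Jm d) m m * (Jm 3 * Jp 3) k k + (Jm d * Jp d) m m * (Jp 3 * Jm 3) k k := by
  simp only [spinFlip, add_mul, mul_add, ← mul_kronecker_mul, Matrix.add_apply, kronecker_apply,
    Jp_mul_Jp_apply_self, Jm_mul_Jm_apply_self]
  ring

lemma J2one_eq :
    J2one d = diagonal (fun p : Fin d × Fin 3 =>
      (lam d : ℂ) + 2 + 2 * (Jz d p.1 p.1 * Jz 3 p.2 p.2)) + spinFlip d := by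
  have hlam3 : (lam 3 : ℂ) = 2 := by norm_num [lam]
  calc J2one d
      = (Jx d ^ 2 + Jy d ^ 2 + Jz d ^ 2) ⊗ₖ (1 : Matrix (Fin 3) (Fin 3) ℂ)
        + (1 : Matrix (Fin d) (Fin d) ℂ) ⊗ₖ (Jx 3 ^ 2 + Jy 3 ^ 2 + Jz 3 ^ 2)
        + (2 : ℂ) • (Jz d ⊗ₖ Jz 3) + (2 : ℂ) • (Jx d ⊗ₖ Jx 3 + Jy d ⊗ₖ Jy 3) := by
        rw [J2one, sq_kronecker_one_add_one_kronecker, sq_kronecker_one_add_one_kronecker,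
          sq_kronecker_one_add_one_kronecker]
        simp only [add_kronecker, kronecker_add]
        module
    _ = _ := by
        rw [Jx_sq_add_Jy_sq_add_Jz_sq, Jx_sq_add_Jy_sq_add_Jz_sq, hlam3, Jx, Jx, Jy, Jy,
          kronecker_add_kronecker_of_ladder, smul_smul, smul_kronecker, kronecker_smul,
          one_kronecker_one, Jz, Jz, diagonal_kronecker_diagonal, spinFlip]
        ext p q
        rcases eq_or_ne p q with rfl | hpq
        · simp
        · simp [hpq]

lemma lagProj_apply_self (μ ν₁ ν₂ : ℤ) (m : Fin d) (k : Fin 3) :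
    lagProj d μ ν₁ ν₂ (m, k) (m, k)
      = (((lamMu d μ - lamMu d ν₁) * (lamMu d μ - lamMu d ν₂) : ℝ) : ℂ)⁻¹ *
        ((jr d * (jr d + 1) + 2 + 2 * (Jz d m m * ((k : ℂ) - 1)) - (jr d + ν₁) * (jr d + ν₁ + 1))
            * (jr d * (jr d + 1) + 2 + 2 * (Jz d m m * ((k : ℂ) - 1)) - (jr d + ν₂) * (jr d + ν₂ + 1))
          + (jr d + Jz d m m) * (jr d - Jz d m m + 1) * (((k : ℂ) + 1) * (2 - k))
          + (jr d + Jz d m m + 1) * (jr d - Jz d m m) * ((k : ℂ) * (3 - k))) := by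
  have hm : ((m : ℕ) : ℂ) = jr d + Jz d m m := by rw [Jz_apply_self]; ring
  have hk : Jz 3 k k = (k : ℂ) - 1 := by rw [Jz_apply_self, jr]; norm_num
  rw [lagProj, Matrix.smul_apply, smul_eq_mul, J2one_eq,
    mul_apply_self_of_diagonal_add _ (spinFlip_apply_self d), spinFlip_mul_self_apply_self,
    Jp_mul_Jm, Jm_mul_Jp, Jp_mul_Jm, Jm_mul_Jp]
  simp only [diagonal_apply_eq, hm, hk, natCast_eq_two_mul_jr_add_one d, lamMu_eq, lam_eq]
  push_cast
  ring

end Coupling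

section ClebschGordan

variable {d : ℕ} (hj : 0 < jr d) (m : Fin d)
include hj

lemma ProjM1_apply_self :
    ProjM1 d (m, 0) (m, 0) = ((jr d : ℂ) + Jz d m m) * ((jr d : ℂ) + Jz d m m - 1)
      / (2 * (jr d : ℂ) * (2 * (jr d : ℂ) + 1)) := by
  have hc : (lamMu d (-1) - lamMu d 0) * (lamMu d (-1) - lamMu d 1) ≠ 0 := by
    rw [lamMu_sub_lamMu, lamMu_sub_lamMu]
    push_cast
    nlinarith
  have hden : 2 * jr d * (2 * jr d + 1) ≠ 0 := by positivity
  rw [ProjM1, lagProj_apply_self, inv_mul_eq_div,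
    div_eq_div_iff (by exact_mod_cast hc) (by exact_mod_cast hden)]
  push_cast [lamMu_sub_lamMu, Fin.val_zero]
  ring

lemma Proj0_apply_self :
    Proj0 d (m, 1) (m, 1) = Jz d m m ^ 2 / ((jr d : ℂ) * ((jr d : ℂ) + 1)) := by
  have hc : (lamMu d 0 - lamMu d (-1)) * (lamMu d 0 - lamMu d 1) ≠ 0 := by
    rw [lamMu_sub_lamMu, lamMu_sub_lamMu]
    push_cast
    nlinarith
  have hden : jr d * (jr d + 1) ≠ 0 := by positivity
  rw [Proj0, lagProj_apply_self, inv_mul_eq_div,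
    div_eq_div_iff (by exact_mod_cast hc) (by exact_mod_cast hden)]
  push_cast [lamMu_sub_lamMu, Fin.val_one]
  ring

lemma ProjP1_apply_self :
    ProjP1 d (m, 2) (m, 2) = ((jr d : ℂ) + Jz d m m + 1) * ((jr d : ℂ) + Jz d m m + 2)
      / ((2 * (jr d : ℂ) + 1) * (2 * (jr d : ℂ) + 2)) := by
  have hc : (lamMu d 1 - lamMu d (-1)) * (lamMu d 1 - lamMu d 0) ≠ 0 := by
    rw [lamMu_sub_lamMu, lamMu_sub_lamMu]
    push_cast
    nlinarith
  have hden : (2 * jr d + 1) * (2 * jr d + 2) ≠ 0 := by positivity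
  rw [ProjP1, lagProj_apply_self, inv_mul_eq_div,
    div_eq_div_iff (by exact_mod_cast hc) (by exact_mod_cast hden)]
  push_cast [lamMu_sub_lamMu, Fin.val_two]
  ring

end ClebschGordan

theorem stmt_18 (d : ℕ) (hd : 3 ≤ d)
    (ρ : Matrix (Fin d) (Fin d) ℂ) (hρ : Matrix.trace ρ = 1)
    (hcomm : ρ * Jz d = Jz d * ρ) :
    (3 : ℂ)⁻¹ *
      (Matrix.trace (ProjM1 d * (ρ ⊗ₖ Matrix.single (0 : Fin 3) (0 : Fin 3) (1 : ℂ)))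
       + Matrix.trace (Proj0 d * (ρ ⊗ₖ Matrix.single (1 : Fin 3) (1 : Fin 3) (1 : ℂ)))
       + Matrix.trace (ProjP1 d * (ρ ⊗ₖ Matrix.single (2 : Fin 3) (2 : Fin 3) (1 : ℂ))))
    = 1 / 6
      + ((((2 * jr d + 1) ^ 2 - 2) / (6 * jr d * (jr d + 1) * (2 * jr d + 1)) : ℝ) : ℂ)
          * Matrix.trace (ρ * Jz d)
      + ((1 / (2 * jr d * (jr d + 1)) : ℝ) : ℂ) * Matrix.trace (ρ * (Jz d) ^ 2) := by
  have hj : 0 < jr d := by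
    have : (3 : ℝ) ≤ d := by exact_mod_cast hd
    unfold jr
    linarith
  have hJz : Function.Injective fun m : Fin d => (m : ℂ) - ((d : ℂ) - 1) / 2 :=
    fun a b h => Fin.ext (by exact_mod_cast sub_left_injective h)
  obtain ⟨r, rfl⟩ : ∃ r, ρ = diagonal r := ⟨_, eq_diagonal_of_commute_diagonal hJz hcomm⟩
  rw [trace_diagonal] at hρ
  rw [trace_mul_diagonal_kronecker_single, trace_mul_diagonal_kronecker_single,
    trace_mul_diagonal_kronecker_single, trace_diagonal_mul, trace_diagonal_mul,
    show (1 / 6 : ℂ) = ∑ m, r m * (1 / 6) by rw [← Finset.sum_mul, hρ, one_mul]]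
  simp only [ProjM1_apply_self hj, Proj0_apply_self hj, ProjP1_apply_self hj, Jz_sq_apply_self,
    Finset.mul_sum, ← Finset.sum_add_distrib]
  refine Finset.sum_congr rfl fun m _ => ?_
  have hj₀ : (jr d : ℂ) ≠ 0 := by exact_mod_cast hj.ne'
  have hj₁ : 2 * (jr d : ℂ) + 1 ≠ 0 := by exact_mod_cast (by positivity : 2 * jr d + 1 ≠ 0)
  have hj₂ : (jr d : ℂ) + 1 ≠ 0 := by exact_mod_cast (by positivity : jr d + 1 ≠ 0)
  push_cast
  linear_combination r m * average_clebschGordan_sq hj₀ hj₁ hj₂ (Jz d m m)
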